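/- arXiv:2306.15240 — 4 statements merged into one kernel-verified Lean document; each statement's English description precedes it below -/
import Mathlib

section
/- The eigenvalues of the 4×4 Hermitian matrix G with rows (1, -1, 0, -e^{it}/2), (-1, 1, -h, 0), (0, -h, 1, -h), (-e^{-it}/2, 0, -h, 1) are 1 ± √(16h² + 10 ± 2√(64h⁴ + 64h²cos(t) + 25))/4, i.e., the characteristic polynomial of G equals the product of (x - 1 ∓ √(16h²+10±2√(64h⁴+64h²cos t+25))/4) over all four sign choices. -/
noncomputable def GramG (h t : ℝ) : Matrix (Fin 4) (Fin 4) ℂ :=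
  !![1, -1, 0, -Complex.exp (t * Complex.I) / 2;
     -1, 1, -(h : ℂ), 0;
     0, -(h : ℂ), 1, -(h : ℂ);
     -Complex.exp (-t * Complex.I) / 2, 0, -(h : ℂ), 1]

set_option maxHeartbeats 1000000 in
lemma det_fin_four' (a b c d e f g h' i j k l m n o p : ℂ) :
    Matrix.det !![a,b,c,d; e,f,g,h'; i,j,k,l; m,n,o,p] =
      a*(f*(k*p-l*o) - g*(j*p-l*n) + h'*(j*o-k*n))
    - b*(e*(k*p-l*o) - g*(i*p-l*m) + h'*(i*o-k*m))
    + c*(e*(j*p-l*n) - f*(i*p-l*m) + h'*(i*n-j*m))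
    - d*(e*(j*o-k*n) - f*(i*o-k*m) + g*(i*n-j*m)) := by
  simp [Matrix.det_succ_row_zero, Fin.sum_univ_succ, Matrix.det_fin_three,
    Fin.succAbove, Matrix.submatrix_apply, Matrix.cons_val_succ,
    Fin.castSucc, Fin.castAdd, Fin.castLE]
  ring

set_option maxHeartbeats 1000000 in
theorem charpoly_GramG (h t : ℝ)
    (h1 : 0 ≤ 64 * h ^ 4 + 64 * h ^ 2 * Real.cos t + 25)
    (h2 : 0 ≤ 16 * h ^ 2 + 10 +
      2 * Real.sqrt (64 * h ^ 4 + 64 * h ^ 2 * Real.cos t + 25))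
    (h3 : 0 ≤ 16 * h ^ 2 + 10 -
      2 * Real.sqrt (64 * h ^ 4 + 64 * h ^ 2 * Real.cos t + 25)) :
    ∀ x : ℂ,
      (Matrix.charpoly (GramG h t)).eval x =
        (x - (1 + ((Real.sqrt (16 * h ^ 2 + 10 +
            2 * Real.sqrt (64 * h ^ 4 + 64 * h ^ 2 * Real.cos t + 25)) / 4 : ℝ) : ℂ))) *
        (x - (1 - ((Real.sqrt (16 * h ^ 2 + 10 +
            2 * Real.sqrt (64 * h ^ 4 + 64 * h ^ 2 * Real.cos t + 25)) / 4 : ℝ) : ℂ))) *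
        (x - (1 + ((Real.sqrt (16 * h ^ 2 + 10 -
            2 * Real.sqrt (64 * h ^ 4 + 64 * h ^ 2 * Real.cos t + 25)) / 4 : ℝ) : ℂ))) *
        (x - (1 - ((Real.sqrt (16 * h ^ 2 + 10 -
            2 * Real.sqrt (64 * h ^ 4 + 64 * h ^ 2 * Real.cos t + 25)) / 4 : ℝ) : ℂ))) := by
  intro x
  have key : (Matrix.charpoly (GramG h t)).eval x
      = (x • (1 : Matrix (Fin 4) (Fin 4) ℂ) - GramG h t).det := by
    rw [Matrix.charpoly, ← Polynomial.coe_evalRingHom, RingHom.map_det]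
    congr 1
    ext i j
    by_cases hij : i = j <;>
      simp [hij, Matrix.charmatrix_apply_eq, Matrix.charmatrix_apply_ne,
        Matrix.one_apply, *]
  rw [key]
  set s := Real.sqrt (64 * h ^ 4 + 64 * h ^ 2 * Real.cos t + 25) with hs
  have hsq : (s : ℂ) ^ 2 = 64 * (h:ℂ) ^ 4 + 64 * (h:ℂ) ^ 2 * (Real.cos t : ℂ) + 25 := by
    rw [← Complex.ofReal_pow, Real.sq_sqrt h1]; push_cast; ring
  have ha : ((Real.sqrt (16 * h ^ 2 + 10 + 2 * s) : ℝ) : ℂ) ^ 2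
      = 16 * (h:ℂ) ^ 2 + 10 + 2 * (s:ℂ) := by
    rw [← Complex.ofReal_pow, Real.sq_sqrt h2]; push_cast; ring
  have hb : ((Real.sqrt (16 * h ^ 2 + 10 - 2 * s) : ℝ) : ℂ) ^ 2
      = 16 * (h:ℂ) ^ 2 + 10 - 2 * (s:ℂ) := by
    rw [← Complex.ofReal_pow, Real.sq_sqrt h3]; push_cast; ring
  have he1 : Complex.exp (t * Complex.I) * Complex.exp (-t * Complex.I) = 1 := by
    rw [← Complex.exp_add]; ring_nf; exact Complex.exp_zero
  have he2 : Complex.exp (t * Complex.I) + Complex.exp (-t * Complex.I)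
      = 2 * (Real.cos t : ℂ) := by
    rw [Complex.ofReal_cos, Complex.cos, mul_comm]
    push_cast; ring_nf
  simp only [GramG]
  rw [show x • (1 : Matrix (Fin 4) (Fin 4) ℂ) -
      !![1, -1, 0, -Complex.exp (t * Complex.I) / 2;
        -1, 1, -(h : ℂ), 0;
        0, -(h : ℂ), 1, -(h : ℂ);
        -Complex.exp (-t * Complex.I) / 2, 0, -(h : ℂ), 1]
    = !![x-1, 1, 0, Complex.exp (t * Complex.I) / 2;
        1, x-1, (h : ℂ), 0;
        0, (h : ℂ), x-1, (h : ℂ);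
        Complex.exp (-t * Complex.I) / 2, 0, (h : ℂ), x-1] by
      ext i j; fin_cases i <;> fin_cases j <;>
        simp [Matrix.one_apply] <;> ring]
  rw [det_fin_four']
  push_cast
  linear_combination (((h:ℂ)^2)/4 - (x-1)^2/4) * he1 - (((h:ℂ)^2)/2) * he2
    + ((x-1)^2/16 - ((Real.sqrt (16 * h ^ 2 + 10 - 2 * s) : ℝ) : ℂ)^2/256) * ha
    + ((x-1)^2/16 - (16*(h:ℂ)^2+10+2*(s:ℂ))/256) * hb
    + (1/64) * hsq
end

section
/- When cos(t) = -(3h²+1)/(4h²), the 4×4 Hermitian matrix G with rows (1, -1, 0, -e^{it}/2), (-1, 1, -h, 0), (0, -h, 1, -h), (-e^{-it}/2, 0, -h, 1) has eigenvalues 0, 2, 1 + √(8h²+1)/2, and 1 - √(8h²+1)/2. -/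
/-- Only the identity, the four edge transpositions, the two perfect matchings and the two
orientations of the 4-cycle `0-1-2-3-0` contribute to the Leibniz expansion. -/
theorem Matrix.det_fin_four_cycle {R : Type*} [CommRing R] (y p p' r r' s s' q q' : R) :
    !![y, p, 0, q; p', y, r, 0; 0, r', y, s; q', 0, s', y].det =
      y ^ 4 - (p * p' + r * r' + s * s' + q * q') * y ^ 2 + p * p' * s * s' + r * r' * q * q'
        - (p * r * s * q' + p' * r' * s' * q) := by
  simp only [det_succ_row_zero, Nat.succ_eq_add_one, Nat.reduceAdd, Fin.isValue, of_apply, cons_val',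
    cons_val_fin_one, cons_val_zero, submatrix_apply, Fin.succ_zero_eq_one, Fin.succAbove, cons_val_one,
    submatrix_submatrix, Function.comp_apply, Fin.succ_one_eq_two, cons_val, det_unique, Fin.default_eq_zero,
    Fin.reduceSucc, Fin.castSucc_zero, Fin.sum_univ_succ, Fin.coe_ofNat_eq_mod, Nat.zero_mod, pow_zero, one_mul,
    lt_self_iff_false, ↓reduceIte, Fin.castSucc_one, Finset.univ_unique, Fin.val_succ, Fin.val_eq_zero, zero_add,
    pow_one, Fin.castSucc_succ, neg_mul, Fin.succ_pos, Finset.sum_neg_distrib, Finset.sum_singleton, not_lt_zero,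
    Fin.reduceCastSucc, even_two, Even.neg_pow, one_pow, Fin.reduceLT, mul_zero, neg_zero, add_zero, zero_mul,
    cons_val_succ, mul_neg, neg_neg, Fin.lt_one_iff, Fin.reduceEq]
  ring

theorem scalar_sub_GramG (h t : ℝ) (x : ℂ) :
    Matrix.scalar (Fin 4) x - GramG h t =
      !![x - 1, 1, 0, Complex.exp (t * Complex.I) / 2;
         1, x - 1, (h : ℂ), 0;
         0, (h : ℂ), x - 1, (h : ℂ);
         Complex.exp (-t * Complex.I) / 2, 0, (h : ℂ), x - 1] := by
  ext i j
  fin_cases i <;> fin_cases j <;> simp [GramG, neg_div]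

theorem eval_charpoly_GramG (h t : ℝ) (x : ℂ) :
    (GramG h t).charpoly.eval x =
      (x - 1) ^ 4 - (2 * h ^ 2 + 5 / 4) * (x - 1) ^ 2 + 5 / 4 * h ^ 2 - h ^ 2 * Real.cos t := by
  have hprod : Complex.exp (t * Complex.I) * Complex.exp (-t * Complex.I) = 1 := by
    rw [← Complex.exp_add, neg_mul, add_neg_cancel, Complex.exp_zero]
  have hsum := Complex.two_cos (t : ℂ)
  rw [Matrix.eval_charpoly, scalar_sub_GramG, Matrix.det_fin_four_cycle, Complex.ofReal_cos]
  linear_combination ((h : ℂ) ^ 2 / 4 - (x - 1) ^ 2 / 4) * hprod + (h : ℂ) ^ 2 / 2 * hsum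

theorem eigenvalues_GramG_degenerate_general (h t : ℝ) (hh : 0 < h)
    (ht : Real.cos t = -((3 * h ^ 2 + 1) / (4 * h ^ 2))) :
    ∀ x : ℂ,
      (Matrix.charpoly (GramG h t)).eval x =
        x * (x - 2) *
          (x - (1 + ((Real.sqrt (8 * h ^ 2 + 1) / 2 : ℝ) : ℂ))) *
          (x - (1 - ((Real.sqrt (8 * h ^ 2 + 1) / 2 : ℝ) : ℂ))) := by
  intro x
  have hcos : h ^ 2 * Real.cos t = -(3 * h ^ 2 + 1) / 4 := by
    rw [ht]
    field_simp
  replace hcos : (h : ℂ) ^ 2 * Complex.cos t = -(3 * h ^ 2 + 1) / 4 := by exact_mod_cast hcos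
  have hsqrt : (Real.sqrt (8 * h ^ 2 + 1) : ℂ) ^ 2 = 8 * h ^ 2 + 1 := by
    exact_mod_cast Real.sq_sqrt (by positivity : (0 : ℝ) ≤ 8 * h ^ 2 + 1)
  rw [eval_charpoly_GramG]
  push_cast
  linear_combination ((x - 1) ^ 2 - 1) / 4 * hsqrt - hcos

theorem eigenvalues_GramG_degenerate (h t : ℝ) (hh : 0 < h)
    (hle : (3 * h ^ 2 + 1) / (4 * h ^ 2) ≤ 1)
    (ht : Real.cos t = -((3 * h ^ 2 + 1) / (4 * h ^ 2))) :
    ∀ x : ℂ,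
      (Matrix.charpoly (GramG h t)).eval x =
        x * (x - 2) *
          (x - (1 + ((Real.sqrt (8 * h ^ 2 + 1) / 2 : ℝ) : ℂ))) *
          (x - (1 - ((Real.sqrt (8 * h ^ 2 + 1) / 2 : ℝ) : ℂ))) :=
  eigenvalues_GramG_degenerate_general h t hh ht
end

section
/- For any integer k, the Cygan distance between the centers of the isometric spheres I(C⁻¹BC⁻¹) and I(AᵏCBCA⁻ᵏ), given by the formula | |(2k+1) - √15·i|² + i(−2k√15 + 2·Im((1/2 − (√15/2)i)(−(1+4k)/2 − (√15/2)i))) |^{1/2}, equals √(4k² + 4k + 16), and this quantity is strictly greater than √2 + 2/√3 for every k ∈ ℤ. -/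
/-!
The symplectic term `2 Im(z w̄) = 2k√15` exactly cancels the difference `-2k√15` of the vertical
coordinates, so the Cygan distance reduces to the horizontal one, `|z - w|² = (2k+1)² + 15 ≥ 15`.
The bound then follows from `√2 + 2/√3 < 3/2 + 2 = 7/2 < √15`.
-/

open Complex

lemma norm_ofReal_sub_ofReal_mul_I_sq (x y : ℝ) : ‖(x : ℂ) - y * I‖ ^ 2 = x ^ 2 + y ^ 2 := by
  rw [Complex.sq_norm, sub_eq_add_neg, ← neg_mul, ← ofReal_neg, normSq_add_mul_I, neg_sq]

lemma sqrt_two_add_two_div_sqrt_three_lt_sqrt_fifteen : √2 + 2 / √3 < √15 := by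
  have hsqrt_two : √2 < 3 / 2 := (Real.sqrt_lt' (by norm_num)).2 (by norm_num)
  have hsqrt_three : 1 < √3 := Real.lt_sqrt_of_sq_lt (by norm_num)
  have htwo_div : 2 / √3 < 2 := (div_lt_iff₀ (by positivity)).2 (by linarith)
  calc √2 + 2 / √3 < 7 / 2 := by linarith
    _ < √15 := Real.lt_sqrt_of_sq_lt (by norm_num)

lemma sqrt_fifteen_le_sqrt_four_mul_sq_add (x : ℝ) : √15 ≤ √(4 * x ^ 2 + 4 * x + 16) :=
  Real.sqrt_le_sqrt (by nlinarith [sq_nonneg (2 * x + 1)])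

theorem cygan_distance_formula (k : ℤ) :
    Real.sqrt (Norm.norm
        (((Norm.norm (((2 * (k : ℝ) + 1 : ℝ) : ℂ) - (Real.sqrt 15 : ℂ) * Complex.I)) ^ 2 : ℂ)
          + Complex.I * (((-2 * (k : ℝ) * Real.sqrt 15 : ℝ) : ℂ)
            + 2 * (((((1 / 2 : ℂ) - ((Real.sqrt 15 / 2 : ℝ) : ℂ) * Complex.I) *
                (-(((1 + 4 * (k : ℝ)) / 2 : ℝ) : ℂ) - ((Real.sqrt 15 / 2 : ℝ) : ℂ) * Complex.I)).im : ℝ) : ℂ))))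
      = Real.sqrt (4 * (k : ℝ) ^ 2 + 4 * (k : ℝ) + 16) ∧
    Real.sqrt (4 * (k : ℝ) ^ 2 + 4 * (k : ℝ) + 16) > Real.sqrt 2 + 2 / Real.sqrt 3 := by
  refine ⟨?_, sqrt_two_add_two_div_sqrt_three_lt_sqrt_fifteen.trans_le
    (sqrt_fifteen_le_sqrt_four_mul_sq_add k)⟩
  have horizontal : ‖((2 * (k : ℝ) + 1 : ℝ) : ℂ) - (√15 : ℂ) * I‖ ^ 2
      = 4 * (k : ℝ) ^ 2 + 4 * k + 16 := by
    rw [norm_ofReal_sub_ofReal_mul_I_sq, Real.sq_sqrt (by norm_num)]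
    ring
  have im_eq : (((1 / 2 : ℂ) - ((√15 / 2 : ℝ) : ℂ) * I) *
      (-(((1 + 4 * (k : ℝ)) / 2 : ℝ) : ℂ) - ((√15 / 2 : ℝ) : ℂ) * I)).im = k * √15 := by
    simp only [mul_im, sub_re, sub_im, neg_re, neg_im, mul_re, ofReal_re, ofReal_im, I_re, I_im,
      div_ofNat_re, div_ofNat_im, one_re, one_im]
    ring
  have vertical_cancels : ((‖((2 * (k : ℝ) + 1 : ℝ) : ℂ) - (√15 : ℂ) * I‖ : ℂ) ^ 2
      + I * (((-2 * (k : ℝ) * √15 : ℝ) : ℂ) + 2 * ((k * √15 : ℝ) : ℂ)))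
      = ((4 * (k : ℝ) ^ 2 + 4 * k + 16 : ℝ) : ℂ) := by
    rw [← ofReal_pow, horizontal]
    push_cast
    ring
  rw [im_eq, vertical_cancels, norm_real,
    Real.norm_of_nonneg (by nlinarith [sq_nonneg (2 * (k : ℝ) + 1)])]
end

section
/- The real quartic expression 16k⁴ - 16k³ + 96k² - 136k + 76 is strictly greater than (2 + √2)⁴ for every integer k except k = 0 and k = 1. -/
theorem quartic_distance_bound :
    ∀ k : ℤ, k ≠ 0 → k ≠ 1 →
      16 * (k : ℝ) ^ 4 - 16 * (k : ℝ) ^ 3 + 96 * (k : ℝ) ^ 2 - 136 * (k : ℝ) + 76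
        > (2 + Real.sqrt 2) ^ 4 := by
  intro k hk0 hk1
  have hs : Real.sqrt 2 < 1.5 := by
    rw [show (1.5 : ℝ) = Real.sqrt (1.5 ^ 2) by rw [Real.sqrt_sq]; norm_num]
    exact Real.sqrt_lt_sqrt (by norm_num) (by norm_num)
  have hs0 : (0 : ℝ) ≤ Real.sqrt 2 := Real.sqrt_nonneg 2
  have hupper : (2 + Real.sqrt 2) ^ 4 < 3.5 ^ 4 := by
    apply pow_lt_pow_left₀ (by linarith) (by linarith)
    norm_num
  have hcase : k ≤ -1 ∨ 2 ≤ k := by omega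
  have hk : (k : ℝ) ≤ -1 ∨ 2 ≤ (k : ℝ) := by
    rcases hcase with h | h
    · left; exact_mod_cast h
    · right; exact_mod_cast h
  have hq : 16 * (k : ℝ) ^ 4 - 16 * (k : ℝ) ^ 3 + 96 * (k : ℝ) ^ 2 - 136 * (k : ℝ) + 76 ≥ 316 := by
    rcases hk with h | h
    · nlinarith [sq_nonneg ((k : ℝ) + 1), sq_nonneg ((k : ℝ) ^ 2 + (k : ℝ)), sq_nonneg ((k : ℝ) ^ 2 - 1)]
    · nlinarith [sq_nonneg ((k : ℝ) - 2), sq_nonneg ((k : ℝ) ^ 2 - 2 * (k : ℝ)), sq_nonneg ((k : ℝ) ^ 2 - 4)]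
  calc (2 + Real.sqrt 2) ^ 4 < 3.5 ^ 4 := hupper
    _ < 316 := by norm_num
    _ ≤ _ := hq
end
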